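/- arXiv:2204.04015 — 4 statements merged into one kernel-verified Lean document; each statement's English description precedes it below -/
import Mathlib

section
/- For all real α, β > −1 with α+β+1 > 0, every integer n ≥ 0, and every real t, one has Σ_{k=0}^{n} ((2k+α+β+1)/(α+β+1)) · ((α+β+1)_k/(β+1)_k) · P_k^{(α,β)}(t) = ((α+β+2)_n/(β+1)_n) · P_n^{(α+1,β)}(t). -/
open Finset

/-- The Pochhammer symbol `(x)_n = x (x+1) ⋯ (x+n-1)`. -/
noncomputable def poch (x : ℝ) (n : ℕ) : ℝ := (ascPochhammer ℝ n).eval x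

/-- The Jacobi polynomial `P_n^{(α,β)}`, via its standard explicit expansion
(equivalent to Rodrigues' formula). -/
noncomputable def jacobiP (α β : ℝ) (n : ℕ) (t : ℝ) : ℝ :=
  ∑ k ∈ Finset.range (n + 1),
    poch (α + k + 1) (n - k) / ((n - k).factorial : ℝ) *
      (poch (β + (n - k) + 1) k / (k.factorial : ℝ)) *
      ((t - 1) / 2) ^ k * ((t + 1) / 2) ^ (n - k)

/-!
With `x = (t - 1) / 2` and `y = (t + 1) / 2`, the explicit expansion writes `P_n^{(α,β)}(t)` as a
binary form of degree `n` in `x, y`. Since `y - x = 1`, the contiguous relation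
`(α+β+2n+1) P_n^{(α,β)} = (α+β+n+1) P_n^{(α+1,β)} - (β+n) P_{n-1}^{(α+1,β)}` is equivalent to an
identity of forms of degree `n`, which holds coefficient by coefficient by elementary Pochhammer
algebra. Multiplied by `(α+β+2)_n / (β+1)_{n+1}`, the relation for `n + 1` says that the
`(n+1)`-st summand is the difference of two consecutive right-hand sides, so the formula follows
by induction on `n`.
-/

section HomogeneousSums

variable {R : Type*} [CommRing R]

theorem sum_range_succ_succ_pow_mul_pow (b : ℕ → R) (x y : R) (n : ℕ) :
    ∑ k ∈ range (n + 1 + 1), b k * x ^ k * y ^ (n + 1 - k) =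
      b 0 * y ^ (n + 1) + ∑ k ∈ range n, b (k + 1) * x ^ (k + 1) * y ^ (n - k) +
        b (n + 1) * x ^ (n + 1) := by
  rw [sum_range_succ, sum_range_succ']
  simp only [Nat.add_sub_add_right, Nat.sub_zero, Nat.sub_self, pow_zero, mul_one]
  ring

theorem sub_mul_sum_range_pow_mul_pow (a : ℕ → R) (x y : R) (n : ℕ) :
    (y - x) * ∑ k ∈ range (n + 1), a k * x ^ k * y ^ (n - k) =
      a 0 * y ^ (n + 1) + ∑ k ∈ range n, (a (k + 1) - a k) * x ^ (k + 1) * y ^ (n - k) -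
        a n * x ^ (n + 1) := by
  have hy : ∀ k ∈ range (n + 1),
      y * (a k * x ^ k * y ^ (n - k)) = a k * x ^ k * y ^ (n + 1 - k) :=
    fun k hk => by rw [Nat.sub_add_comm (mem_range_succ_iff.1 hk), pow_succ]; ring
  have hx : ∀ k ∈ range (n + 1),
      x * (a k * x ^ k * y ^ (n - k)) = a k * x ^ (k + 1) * y ^ (n - k) :=
    fun k _ => by ring
  rw [sub_mul, mul_sum, mul_sum, sum_congr rfl hy, sum_congr rfl hx, sum_range_succ',
    sum_range_succ]
  simp only [sub_mul, sum_sub_distrib, Nat.add_sub_add_right, Nat.sub_zero, Nat.sub_self,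
    pow_zero, mul_one]
  ring

end HomogeneousSums

theorem poch_zero (x : ℝ) : poch x 0 = 1 := by simp [poch]

theorem poch_succ_right (x : ℝ) (n : ℕ) : poch x (n + 1) = poch x n * (x + n) :=
  ascPochhammer_succ_eval n x

theorem poch_succ_left (x : ℝ) (n : ℕ) : poch x (n + 1) = x * poch (x + 1) n := by
  simp [poch, ascPochhammer_succ_left, Polynomial.eval_comp]

noncomputable def jacobiCoeff (α β : ℝ) (k m : ℕ) : ℝ :=
  poch (α + k + 1) m / m.factorial * (poch (β + m + 1) k / k.factorial)

theorem jacobiCoeff_contiguous (α β : ℝ) (k m : ℕ) :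
    (α + β + 2 * (k + m + 2) + 1) * jacobiCoeff α β (k + 1) (m + 1) =
      (α + β + (k + m + 2) + 1) * jacobiCoeff (α + 1) β (k + 1) (m + 1) -
        (β + (k + m + 2)) *
          (jacobiCoeff (α + 1) β (k + 1) m - jacobiCoeff (α + 1) β k (m + 1)) := by
  unfold jacobiCoeff
  push_cast
  rw [poch_succ_left (α + (k + 1) + 1), poch_succ_left (α + 1 + k + 1),
    poch_succ_left (β + m + 1),
    poch_succ_right (α + 1 + (k + 1) + 1), poch_succ_right (β + (m + 1) + 1),
    show α + (k + 1) + 1 + 1 = α + 1 + (k + 1) + 1 by ring,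
    show α + 1 + k + 1 + 1 = α + 1 + (k + 1) + 1 by ring,
    show β + m + 1 + 1 = β + (m + 1) + 1 by ring]
  push_cast [Nat.factorial_succ]
  field_simp
  ring

theorem jacobiCoeff_contiguous_zero_left (α β : ℝ) (m : ℕ) :
    (α + β + 2 * (m + 1) + 1) * jacobiCoeff α β 0 (m + 1) =
      (α + β + (m + 1) + 1) * jacobiCoeff (α + 1) β 0 (m + 1) -
        (β + (m + 1)) * jacobiCoeff (α + 1) β 0 m := by
  unfold jacobiCoeff
  push_cast
  rw [poch_succ_left (α + 0 + 1), poch_succ_right (α + 1 + 0 + 1),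
    show α + 0 + 1 + 1 = α + 1 + 0 + 1 by ring]
  push_cast [Nat.factorial_succ, poch_zero]
  field_simp
  ring

theorem jacobiCoeff_contiguous_zero_right (α β : ℝ) (k : ℕ) :
    (α + β + 2 * (k + 1) + 1) * jacobiCoeff α β (k + 1) 0 =
      (α + β + (k + 1) + 1) * jacobiCoeff (α + 1) β (k + 1) 0 +
        (β + (k + 1)) * jacobiCoeff (α + 1) β k 0 := by
  unfold jacobiCoeff
  push_cast
  rw [poch_succ_right (β + 0 + 1)]
  push_cast [Nat.factorial_succ, poch_zero]
  field_simp
  ring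

noncomputable def jacobiForm (α β : ℝ) (n : ℕ) (x y : ℝ) : ℝ :=
  ∑ k ∈ range (n + 1), jacobiCoeff α β k (n - k) * x ^ k * y ^ (n - k)

theorem jacobiP_eq_jacobiForm (α β : ℝ) (n : ℕ) (t : ℝ) :
    jacobiP α β n t = jacobiForm α β n ((t - 1) / 2) ((t + 1) / 2) := by
  refine sum_congr rfl fun k hk => ?_
  rw [jacobiCoeff, Nat.cast_sub (mem_range_succ_iff.1 hk)]

theorem jacobiForm_contiguous (α β : ℝ) (n : ℕ) (x y : ℝ) :
    (α + β + 2 * (n + 1) + 1) * jacobiForm α β (n + 1) x y =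
      (α + β + (n + 1) + 1) * jacobiForm (α + 1) β (n + 1) x y -
        (β + (n + 1)) * ((y - x) * jacobiForm (α + 1) β n x y) := by
  have hmid : (α + β + 2 * (n + 1) + 1) *
        ∑ k ∈ range n, jacobiCoeff α β (k + 1) (n - k) * x ^ (k + 1) * y ^ (n - k) =
      (α + β + (n + 1) + 1) *
          ∑ k ∈ range n, jacobiCoeff (α + 1) β (k + 1) (n - k) * x ^ (k + 1) * y ^ (n - k) -
        (β + (n + 1)) * ∑ k ∈ range n, (jacobiCoeff (α + 1) β (k + 1) (n - (k + 1)) -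
          jacobiCoeff (α + 1) β k (n - k)) * x ^ (k + 1) * y ^ (n - k) := by
    rw [mul_sum, mul_sum, mul_sum, ← sum_sub_distrib]
    refine sum_congr rfl fun k hk => ?_
    obtain ⟨m, rfl⟩ : ∃ m, n = k + 1 + m := ⟨n - (k + 1), by grind⟩
    rw [show k + 1 + m - k = m + 1 by omega, Nat.add_sub_cancel_left]
    push_cast
    linear_combination (x ^ (k + 1) * y ^ (m + 1)) * jacobiCoeff_contiguous α β k m
  unfold jacobiForm
  rw [sum_range_succ_succ_pow_mul_pow (fun k => jacobiCoeff α β k (n + 1 - k)),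
    sum_range_succ_succ_pow_mul_pow (fun k => jacobiCoeff (α + 1) β k (n + 1 - k)),
    sub_mul_sum_range_pow_mul_pow (fun k => jacobiCoeff (α + 1) β k (n - k))]
  simp only [Nat.sub_zero, Nat.sub_self, Nat.add_sub_add_right]
  linear_combination hmid + y ^ (n + 1) * jacobiCoeff_contiguous_zero_left α β n +
    x ^ (n + 1) * jacobiCoeff_contiguous_zero_right α β n

theorem jacobiP_contiguous (α β : ℝ) (n : ℕ) (t : ℝ) :
    (α + β + 2 * (n + 1) + 1) * jacobiP α β (n + 1) t =
      (α + β + (n + 1) + 1) * jacobiP (α + 1) β (n + 1) t -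
        (β + (n + 1)) * jacobiP (α + 1) β n t := by
  simpa only [jacobiP_eq_jacobiForm, show (t + 1) / 2 - (t - 1) / 2 = 1 by ring, one_mul] using
    jacobiForm_contiguous α β n ((t - 1) / 2) ((t + 1) / 2)

theorem jacobiP_zero (α β t : ℝ) : jacobiP α β 0 t = 1 := by
  simp [jacobiP, poch_zero]

theorem stmt0_general (α β : ℝ) (hβ : -1 < β) (h : 0 < α + β + 1) (n : ℕ) (t : ℝ) :
    ∑ k ∈ Finset.range (n + 1),
      (2 * (k : ℝ) + α + β + 1) / (α + β + 1) * (poch (α + β + 1) k / poch (β + 1) k) *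
        jacobiP α β k t
      = poch (α + β + 2) n / poch (β + 1) n * jacobiP (α + 1) β n t := by
  induction n with
  | zero => simp [poch_zero, jacobiP_zero, h.ne']
  | succ n ih =>
    have hβn : β + 1 + n ≠ 0 := by linarith [(n.cast_nonneg : (0 : ℝ) ≤ n)]
    have hpoch : poch (β + 1) n ≠ 0 := (ascPochhammer_pos n _ (by linarith)).ne'
    rw [sum_range_succ, ih, poch_succ_right (β + 1), poch_succ_right (α + β + 2),
      poch_succ_left (α + β + 1), show α + β + 1 + 1 = α + β + 2 by ring]
    field_simp
    push_cast
    linear_combination poch (α + β + 2) n * jacobiP_contiguous α β n t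

/-- Summation formula for Jacobi polynomials. -/
theorem stmt0 (α β : ℝ) (hα : -1 < α) (hβ : -1 < β) (h : 0 < α + β + 1) (n : ℕ) (t : ℝ) :
    ∑ k ∈ Finset.range (n + 1),
      (2 * (k : ℝ) + α + β + 1) / (α + β + 1) * (poch (α + β + 1) k / poch (β + 1) k) *
        jacobiP α β k t
      = poch (α + β + 2) n / poch (β + 1) n * jacobiP (α + 1) β n t :=
  stmt0_general α β hβ h n t
end

section
/- For every real η > 0, one has ∫_0^1 (1 − (1+z)^{−η}) (1+z^η)/z dz = ψ(η+1) + γ, where ψ is the digamma function and γ the Euler–Mascheroni constant. -/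
/-! The substitution `z = t / (1 - t)` maps `(0, 1/2)` onto `(0, 1)` and turns the integrand into
`g t + g (1 - t) + correctionDeriv η t`, where `g u = (1 - u ^ η) / (1 - u)` and
`correctionDeriv η` is the derivative of `correction η`, which takes the value `1 / η` at both `0`
and `1/2`. Hence the integral equals `∫₀¹ g`, and expanding `g u = ∑ₖ uᵏ (1 - u ^ η)` gives
`∑ₖ (1 / (k + 1) - 1 / (k + η + 1))`. By `ψ (x + 1) = ψ x + 1 / x` the partial sums of this series
are `ψ (η + 1) + γ - (ψ (η + 1 + n) - ψ (1 + n))`, and the bracket tends to `0` because `ψ` is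
monotone, `log Γ` being convex. -/

open Real

/-- The digamma function `ψ = Γ'/Γ`. -/
noncomputable def digamma (x : ℝ) : ℝ := deriv Real.Gamma x / Real.Gamma x

/-- The Euler–Mascheroni constant `γ = −Γ′(1)`. -/
noncomputable def eulerGamma : ℝ := -deriv Real.Gamma 1

open MeasureTheory Set Filter Topology

section Digamma

lemma differentiableAt_Gamma_of_pos {x : ℝ} (hx : 0 < x) : DifferentiableAt ℝ Gamma x :=
  differentiableOn_Gamma_Ioi.differentiableAt (Ioi_mem_nhds hx)

lemma digamma_one : digamma 1 = -eulerGamma := by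
  simp [digamma, eulerGamma]

lemma digamma_eq_deriv_log_Gamma {x : ℝ} (hx : 0 < x) : digamma x = deriv (log ∘ Gamma) x := by
  rw [Function.comp_def, deriv.log (differentiableAt_Gamma_of_pos hx) (Gamma_pos_of_pos hx).ne',
    digamma]

lemma monotoneOn_digamma : MonotoneOn digamma (Ioi 0) := by
  have hd : ∀ x ∈ Ioi (0 : ℝ), DifferentiableAt ℝ (log ∘ Gamma) x := fun x hx =>
    (differentiableAt_Gamma_of_pos hx).log (Gamma_pos_of_pos hx).ne'
  intro x hx y hy hxy
  rw [digamma_eq_deriv_log_Gamma hx, digamma_eq_deriv_log_Gamma hy]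
  exact convexOn_log_Gamma.monotoneOn_deriv hd hx hy hxy

lemma digamma_add_one {x : ℝ} (hx : 0 < x) : digamma (x + 1) = digamma x + 1 / x := by
  have hshift : deriv Gamma (x + 1) = Gamma x + x * deriv Gamma x := by
    have hmul : HasDerivAt (fun y => y * Gamma y) (1 * Gamma x + x * deriv Gamma x) x :=
      (hasDerivAt_id' x).mul (differentiableAt_Gamma_of_pos hx).hasDerivAt
    rw [← deriv_comp_add_const, ← one_mul (Gamma x)]
    refine (hmul.congr_of_eventuallyEq ?_).deriv
    filter_upwards [eventually_gt_nhds hx] with y hy using Gamma_add_one hy.ne'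
  have hΓ := (Gamma_pos_of_pos hx).ne'
  rw [digamma, digamma, hshift, Gamma_add_one hx.ne']
  field_simp
  ring

lemma digamma_add_nat {x : ℝ} (hx : 0 < x) (n : ℕ) :
    digamma (x + n) = digamma x + ∑ k ∈ Finset.range n, 1 / (k + x) := by
  induction n with
  | zero => simp
  | succ n ih =>
    rw [Nat.cast_succ, ← add_assoc, digamma_add_one (by positivity), ih, Finset.sum_range_succ,
      add_comm x]
    ring

lemma tendsto_digamma_add_nat_sub {x : ℝ} (hx : 1 ≤ x) :
    Tendsto (fun n : ℕ => digamma (x + n) - digamma (1 + n)) atTop (𝓝 0) := by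
  set m := ⌈x⌉₊
  have hgap : Tendsto (fun n : ℕ => ∑ k ∈ Finset.range m, 1 / (k + (1 + n : ℝ))) atTop (𝓝 0) := by
    rw [← Finset.sum_const_zero (s := Finset.range m)]
    refine tendsto_finsetSum _ fun k _ => ?_
    exact tendsto_const_nhds.div_atTop <| tendsto_atTop_add_const_left _ _ <|
      tendsto_atTop_add_const_left _ _ tendsto_natCast_atTop_atTop
  refine tendsto_of_tendsto_of_tendsto_of_le_of_le tendsto_const_nhds hgap (fun n => ?_) fun n => ?_
  · exact sub_nonneg.2 <| monotoneOn_digamma (mem_Ioi.2 (by positivity))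
      (mem_Ioi.2 (by positivity)) (by linarith)
  · have := monotoneOn_digamma (a := x + n) (b := 1 + n + m) (mem_Ioi.2 (by positivity))
      (mem_Ioi.2 (by positivity)) (by linarith [Nat.le_ceil x])
    rw [digamma_add_nat (x := 1 + n) (by positivity)] at this
    exact sub_le_iff_le_add'.2 this

theorem hasSum_digamma {x : ℝ} (hx : 1 ≤ x) :
    HasSum (fun k : ℕ => 1 / (k + 1) - 1 / (k + x)) (digamma x + eulerGamma) := by
  have hpartial : ∀ n : ℕ, ∑ k ∈ Finset.range n, (1 / (k + 1) - 1 / (k + x)) =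
      digamma x + eulerGamma - (digamma (x + n) - digamma (1 + n)) := by
    intro n
    rw [Finset.sum_sub_distrib, digamma_add_nat (by positivity), digamma_add_nat one_pos,
      digamma_one]
    ring
  have hterm : ∀ k : ℕ, 0 ≤ 1 / ((k : ℝ) + 1) - 1 / (k + x) := fun k =>
    sub_nonneg.2 (one_div_le_one_div_of_le (by positivity) (by linarith))
  rw [hasSum_iff_tendsto_nat_of_nonneg hterm, funext hpartial]
  simpa using (tendsto_digamma_add_nat_sub hx).const_sub (digamma x + eulerGamma)

end Digamma

section SeriesRepresentation

lemma integral_pow_mul_one_sub_rpow (k : ℕ) {η : ℝ} (hη : 0 ≤ η) :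
    ∫ u in (0:ℝ)..1, u ^ k * (1 - u ^ η) = 1 / (k + 1) - 1 / (k + (η + 1)) := by
  have hsplit : ∫ u in (0:ℝ)..1, u ^ k * (1 - u ^ η)
      = ∫ u in (0:ℝ)..1, (u ^ k - u ^ ((k : ℝ) + η)) := by
    refine intervalIntegral.integral_congr_ae (ae_of_all _ fun u hu => ?_)
    rw [uIoc_of_le zero_le_one] at hu
    rw [mul_sub, mul_one, rpow_add hu.1, rpow_natCast]
  have hk : (-1 : ℝ) < k + η := by linarith [(k.cast_nonneg : (0 : ℝ) ≤ k)]
  rw [hsplit, intervalIntegral.integral_sub (intervalIntegral.intervalIntegrable_pow k)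
    (intervalIntegral.intervalIntegrable_rpow' hk), integral_pow, integral_rpow (Or.inl hk)]
  rw [one_pow, zero_pow k.succ_ne_zero, one_rpow, zero_rpow (by linarith)]
  ring_nf

theorem hasSum_integral_one_sub_rpow_div_one_sub {η : ℝ} (hη : 0 ≤ η) :
    HasSum (fun k : ℕ => 1 / (k + 1) - 1 / (k + (η + 1)))
      (∫ u in (0:ℝ)..1, (1 - u ^ η) / (1 - u)) := by
  set F : ℕ → ℝ → ℝ := fun k u => u ^ k * (1 - u ^ η)
  have hF_nonneg : ∀ k, ∀ u ∈ Ioc (0:ℝ) 1, 0 ≤ F k u := fun k u hu =>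
    mul_nonneg (pow_nonneg hu.1.le k) (sub_nonneg.2 (rpow_le_one hu.1.le hu.2 hη))
  have hF_int : ∀ k, Integrable (F k) (volume.restrict (Ioc 0 1)) := fun k =>
    (((continuous_pow k).mul (continuous_const.sub (continuous_rpow_const hη))).integrableOn_Icc
      (a := 0) (b := 1)).mono_set Ioc_subset_Icc_self
  have hF_val : ∀ k : ℕ, ∫ u in Ioc (0:ℝ) 1, F k u = 1 / (k + 1) - 1 / (k + (η + 1)) := fun k => by
    rw [← integral_pow_mul_one_sub_rpow k hη, intervalIntegral.integral_of_le zero_le_one]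
  have hF_norm : ∀ k : ℕ, ∫ u in Ioc (0:ℝ) 1, ‖F k u‖ = ∫ u in Ioc (0:ℝ) 1, F k u := fun k =>
    setIntegral_congr_fun measurableSet_Ioc fun u hu => norm_of_nonneg (hF_nonneg k u hu)
  have hsum := hasSum_integral_of_summable_integral_norm hF_int <| by
    simpa only [hF_norm, hF_val] using (hasSum_digamma (x := η + 1) (by linarith)).summable
  have hlim : ∫ u in Ioc (0:ℝ) 1, ∑' k, F k u = ∫ u in Ioc (0:ℝ) 1, (1 - u ^ η) / (1 - u) := by
    refine setIntegral_congr_fun measurableSet_Ioc fun u hu => ?_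
    rcases hu.2.lt_or_eq with hu1 | rfl
    · rw [tsum_mul_right, tsum_geometric_of_lt_one hu.1.le hu1, div_eq_inv_mul]
    · simp [F]
  rw [intervalIntegral.integral_of_le zero_le_one, ← hlim]
  simpa only [hF_val] using hsum

end SeriesRepresentation

section Integrability

lemma one_sub_rpow_le_max_mul {u η : ℝ} (hu0 : 0 ≤ u) (hu1 : u ≤ 1) (hη : 0 ≤ η) :
    1 - u ^ η ≤ max 1 η * (1 - u) := by
  rcases le_total η 1 with h | h
  · have : u ≤ u ^ η := by simpa using rpow_le_rpow_of_exponent_ge' hu0 hu1 hη h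
    nlinarith [le_max_left 1 η]
  · have := one_add_mul_self_le_rpow_one_add (s := u - 1) (by linarith) h
    rw [add_sub_cancel] at this
    nlinarith [le_max_right 1 η]

lemma one_sub_one_add_rpow_neg_le {z η : ℝ} (hz : 0 ≤ z) (hη : 0 ≤ η) :
    1 - (1 + z) ^ (-η) ≤ η * z := by
  have h1 : 0 < 1 + z := by linarith
  rw [rpow_def_of_pos h1]
  nlinarith [add_one_le_exp (log (1 + z) * -η),
    mul_le_mul_of_nonneg_left (log_le_sub_one_of_pos h1) hη]

lemma intervalIntegrable_one_sub_rpow_div_one_sub {η : ℝ} (hη : 0 ≤ η) :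
    IntervalIntegrable (fun u : ℝ => (1 - u ^ η) / (1 - u)) volume 0 1 := by
  rw [intervalIntegrable_iff_integrableOn_Ioc_of_le zero_le_one]
  refine Measure.integrableOn_of_bounded (M := max 1 η) measure_Ioc_lt_top.ne
    (Measurable.aestronglyMeasurable (by fun_prop))
    ((ae_restrict_mem measurableSet_Ioc).mono fun u hu => ?_)
  rcases hu.2.lt_or_eq with hu1 | rfl
  · have h1u : 0 < 1 - u := by linarith
    rw [norm_of_nonneg (div_nonneg (sub_nonneg.2 (rpow_le_one hu.1.le hu.2 hη)) h1u.le),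
      div_le_iff₀ h1u]
    exact one_sub_rpow_le_max_mul hu.1.le hu.2 hη
  · simp

lemma integrableOn_one_sub_one_add_rpow_neg_mul {η : ℝ} (hη : 0 ≤ η) :
    IntegrableOn (fun z : ℝ => (1 - (1 + z) ^ (-η)) * ((1 + z ^ η) / z)) (Ioo 0 1) := by
  refine Measure.integrableOn_of_bounded (M := η * 2) measure_Ioo_lt_top.ne
    (Measurable.aestronglyMeasurable (by fun_prop))
    ((ae_restrict_mem measurableSet_Ioo).mono fun z hz => ?_)
  have ha : 0 ≤ 1 - (1 + z) ^ (-η) :=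
    sub_nonneg.2 (rpow_le_one_of_one_le_of_nonpos (by linarith [hz.1]) (by linarith))
  have hb : 1 + z ^ η ≤ 2 := by linarith [rpow_le_one hz.1.le hz.2.le hη]
  have hb0 : 0 ≤ 1 + z ^ η := by linarith [rpow_nonneg hz.1.le η]
  rw [norm_of_nonneg (mul_nonneg ha (div_nonneg hb0 hz.1.le)), mul_div_assoc', div_le_iff₀ hz.1]
  nlinarith [one_sub_one_add_rpow_neg_le hz.1.le hη]

end Integrability

section Substitution

lemma hasDerivAt_div_one_sub {t : ℝ} (ht : t ≠ 1) :
    HasDerivAt (fun s : ℝ => s / (1 - s)) ((1 - t) ^ 2)⁻¹ t := by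
  have h1t : 1 - t ≠ 0 := sub_ne_zero.2 (Ne.symm ht)
  refine ((hasDerivAt_id' t).div ((hasDerivAt_id' t).const_sub 1) h1t).congr_deriv ?_
  field_simp
  ring

lemma injOn_div_one_sub : InjOn (fun t : ℝ => t / (1 - t)) (Iio 1) := by
  intro a ha b hb hab
  have ha' : 1 - a ≠ 0 := by linarith [mem_Iio.1 ha]
  have hb' : 1 - b ≠ 0 := by linarith [mem_Iio.1 hb]
  rw [div_eq_div_iff ha' hb'] at hab
  linarith

lemma image_div_one_sub_Ioo : (fun t : ℝ => t / (1 - t)) '' Ioo 0 (1 / 2) = Ioo 0 1 := by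
  ext z
  constructor
  · rintro ⟨t, ⟨ht0, ht2⟩, rfl⟩
    have h1t : 0 < 1 - t := by linarith
    exact ⟨div_pos ht0 h1t, (div_lt_one h1t).2 (by linarith)⟩
  · rintro ⟨hz0, hz1⟩
    refine ⟨z / (1 + z), ⟨by positivity, ?_⟩, ?_⟩
    · rw [div_lt_iff₀ (by linarith)]
      linarith
    · field_simp
      ring

variable {E : Type*} [NormedAddCommGroup E] [NormedSpace ℝ E]

lemma abs_deriv_div_one_sub_smul (f : ℝ → E) :
    EqOn (fun t : ℝ => |((1 - t) ^ 2)⁻¹| • f (t / (1 - t)))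
      (fun t => ((1 - t) ^ 2)⁻¹ • f (t / (1 - t))) (Ioo 0 (1 / 2)) := fun t _ => by
  simp only [abs_of_nonneg (by positivity : (0:ℝ) ≤ ((1 - t) ^ 2)⁻¹)]

lemma integrableOn_Ioo_div_one_sub_iff (f : ℝ → E) :
    IntegrableOn f (Ioo 0 1) ↔
      IntegrableOn (fun t : ℝ => ((1 - t) ^ 2)⁻¹ • f (t / (1 - t))) (Ioo 0 (1 / 2)) := by
  rw [← image_div_one_sub_Ioo, integrableOn_image_iff_integrableOn_abs_deriv_smul measurableSet_Ioo
    (fun t ht => (hasDerivAt_div_one_sub (by linarith [ht.2] : t < 1).ne).hasDerivWithinAt)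
    (injOn_div_one_sub.mono fun t ht => mem_Iio.2 (by linarith [ht.2]))]
  exact integrableOn_congr_fun (abs_deriv_div_one_sub_smul f) measurableSet_Ioo

lemma setIntegral_Ioo_eq_div_one_sub (f : ℝ → E) :
    ∫ z in Ioo 0 1, f z = ∫ t in Ioo 0 (1 / 2), ((1 - t) ^ 2)⁻¹ • f (t / (1 - t)) := by
  rw [← image_div_one_sub_Ioo, integral_image_eq_integral_abs_deriv_smul measurableSet_Ioo
    (fun t ht => (hasDerivAt_div_one_sub (by linarith [ht.2] : t < 1).ne).hasDerivWithinAt)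
    (injOn_div_one_sub.mono fun t ht => mem_Iio.2 (by linarith [ht.2]))]
  exact setIntegral_congr_fun measurableSet_Ioo (abs_deriv_div_one_sub_smul f)

end Substitution

section Reflection

variable {E : Type*} [NormedAddCommGroup E] {f : ℝ → E}

lemma IntervalIntegrable.left_half (hf : IntervalIntegrable f volume 0 1) :
    IntervalIntegrable f volume 0 (1 / 2) :=
  hf.mono_set (uIcc_subset_uIcc_left (by norm_num [uIcc_of_le]))

lemma IntervalIntegrable.right_half (hf : IntervalIntegrable f volume 0 1) :
    IntervalIntegrable f volume (1 / 2) 1 :=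
  hf.mono_set (uIcc_subset_uIcc_right (by norm_num [uIcc_of_le]))

lemma IntervalIntegrable.comp_one_sub_left_half (hf : IntervalIntegrable f volume 0 1) :
    IntervalIntegrable (fun t => f (1 - t)) volume 0 (1 / 2) := by
  convert (hf.right_half.comp_sub_left 1).symm using 1 <;> norm_num

lemma integral_add_comp_one_sub [NormedSpace ℝ E] (hf : IntervalIntegrable f volume 0 1) :
    ∫ t in (0:ℝ)..1 / 2, (f t + f (1 - t)) = ∫ t in (0:ℝ)..1, f t := by
  rw [intervalIntegral.integral_add hf.left_half hf.comp_one_sub_left_half,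
    intervalIntegral.integral_comp_sub_left (fun u => f u) 1,
    ← intervalIntegral.integral_add_adjacent_intervals hf.left_half hf.right_half]
  norm_num

end Reflection

section Correction

noncomputable def correction (η t : ℝ) : ℝ := ((t / (1 - t)) ^ η + (1 - t) ^ η - t ^ η) / η

noncomputable def correctionDeriv (η t : ℝ) : ℝ :=
  (t / (1 - t)) ^ (η - 1) * ((1 - t) ^ 2)⁻¹ - (1 - t) ^ (η - 1) - t ^ (η - 1)

lemma hasDerivAt_correction {η t : ℝ} (hη : η ≠ 0) (ht0 : 0 < t) (ht1 : t < 1) :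
    HasDerivAt (correction η) (correctionDeriv η t) t := by
  have h1t : 0 < 1 - t := by linarith
  have hφ := (hasDerivAt_div_one_sub ht1.ne).rpow_const (p := η) (Or.inl (div_pos ht0 h1t).ne')
  have hu := ((hasDerivAt_id' t).const_sub 1).rpow_const (p := η) (Or.inl h1t.ne')
  have ht := hasDerivAt_rpow_const (p := η) (Or.inl ht0.ne')
  refine (((hφ.add hu).sub ht).div_const η).congr_deriv ?_
  rw [correctionDeriv]
  field_simp
  ring

lemma continuousOn_correction {η : ℝ} (hη : 0 ≤ η) : ContinuousOn (correction η) (Iio 1) := by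
  have hden : ∀ t ∈ Iio (1 : ℝ), 1 - t ≠ 0 := fun t ht => by linarith [mem_Iio.1 ht]
  refine ((((continuousOn_id.div (continuousOn_const.sub continuousOn_id) hden).rpow_const
    fun _ _ => Or.inr hη).add ?_).sub ?_).div_const η
  · exact (continuous_rpow_const hη).comp_continuousOn (continuousOn_const.sub continuousOn_id)
  · exact (continuous_rpow_const hη).continuousOn

lemma integrand_comp_div_one_sub {η t : ℝ} (ht0 : 0 < t) (ht1 : t < 1) :
    ((1 - t) ^ 2)⁻¹ * ((1 - (1 + t / (1 - t)) ^ (-η)) * ((1 + (t / (1 - t)) ^ η) / (t / (1 - t))))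
      = (1 - t ^ η) / (1 - t) + (1 - (1 - t) ^ η) / (1 - (1 - t)) + correctionDeriv η t := by
  have h1t : 0 < 1 - t := by linarith
  have hb : 0 < (1 - t) ^ η := rpow_pos_of_pos h1t η
  have hz : (1 + t / (1 - t)) ^ (-η) = (1 - t) ^ η := by
    rw [show 1 + t / (1 - t) = (1 - t)⁻¹ by field_simp; ring, inv_rpow h1t.le, rpow_neg h1t.le,
      inv_inv]
  rw [correctionDeriv, hz, rpow_sub_one (div_pos ht0 h1t).ne', rpow_sub_one h1t.ne',
    rpow_sub_one ht0.ne', div_rpow ht0.le h1t.le, sub_sub_cancel]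
  field_simp
  ring

lemma intervalIntegrable_correctionDeriv {η : ℝ} (hη : 0 ≤ η) :
    IntervalIntegrable (correctionDeriv η) volume 0 (1 / 2) := by
  have hsubst := ((integrableOn_Ioo_div_one_sub_iff _).1
    (integrableOn_one_sub_one_add_rpow_neg_mul hη)).congr_fun
    (fun t ht => integrand_comp_div_one_sub ht.1 (by linarith [ht.2])) measurableSet_Ioo
  have hg := intervalIntegrable_one_sub_rpow_div_one_sub hη
  have hg' := (hg.left_half.add hg.comp_one_sub_left_half).1.mono_set Ioo_subset_Ioc_self
  rw [intervalIntegrable_iff_integrableOn_Ioo_of_le (by norm_num)]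
  exact (hsubst.sub hg').congr_fun (fun t _ => add_sub_cancel_left _ _) measurableSet_Ioo

lemma integral_correctionDeriv_eq_zero {η : ℝ} (hη : 0 < η) :
    ∫ t in (0:ℝ)..1 / 2, correctionDeriv η t = 0 := by
  rw [intervalIntegral.integral_eq_sub_of_hasDerivAt_of_le (by norm_num)
    ((continuousOn_correction hη.le).mono fun t ht => mem_Iio.2 (by linarith [ht.2]))
    (fun t ht => hasDerivAt_correction hη.ne' ht.1 (by linarith [ht.2]))
    (intervalIntegrable_correctionDeriv hη.le)]
  norm_num [correction, zero_rpow hη.ne']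

end Correction

theorem integral_one_sub_one_add_rpow_neg_mul_eq {η : ℝ} (hη : 0 < η) :
    ∫ z in (0:ℝ)..1, (1 - (1 + z) ^ (-η)) * ((1 + z ^ η) / z)
      = ∫ u in (0:ℝ)..1, (1 - u ^ η) / (1 - u) := by
  have hg := intervalIntegrable_one_sub_rpow_div_one_sub hη.le
  rw [intervalIntegral.integral_of_le zero_le_one, integral_Ioc_eq_integral_Ioo,
    setIntegral_Ioo_eq_div_one_sub]
  simp_rw [smul_eq_mul]
  rw [setIntegral_congr_fun measurableSet_Ioo
      (fun t ht => integrand_comp_div_one_sub ht.1 (by linarith [ht.2])),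
    ← integral_Ioc_eq_integral_Ioo, ← intervalIntegral.integral_of_le (by norm_num),
    intervalIntegral.integral_add (hg.left_half.add hg.comp_one_sub_left_half)
      (intervalIntegrable_correctionDeriv hη.le),
    integral_correctionDeriv_eq_zero hη, add_zero, integral_add_comp_one_sub hg]

/-- `∫_0^1 (1 − (1+z)^{−η}) (1+z^η)/z dz = ψ(η+1) + γ`. -/
theorem stmt4 (η : ℝ) (hη : 0 < η) :
    ∫ z in (0:ℝ)..1, (1 - (1 + z) ^ (-η)) * ((1 + z ^ η) / z)
      = digamma (η + 1) + eulerGamma := by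
  rw [integral_one_sub_one_add_rpow_neg_mul_eq hη]
  exact (hasSum_integral_one_sub_rpow_div_one_sub hη.le).unique (hasSum_digamma (by linarith))
end

section
/- Let c > 0 and d, δ ≥ 0 be real numbers. Then, as t → 0⁺, Σ_{k=1}^{∞} (ck+d)^{δ} e^{−2(ck+d)² t} = ((2t)^{−(δ+1)/2}/(2c)) Γ((δ+1)/2) + O(t^{−δ/2}); that is, there exist constants M, t₀ > 0 such that for all 0 < t < t₀, | Σ_{k=1}^{∞} (ck+d)^{δ} e^{−2(ck+d)² t} − ((2t)^{−(δ+1)/2}/(2c)) Γ((δ+1)/2) | ≤ M t^{−δ/2}. -/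
/-! The sum is a unit-step Riemann sum of `f x = (c x + d) ^ δ e^{-2t (c x + d)²}`. On each
interval `(k, k + 1]` the sample `f (k + 1)` differs from the integral of `f` by at most
`∫ |f'|` over that interval, so the sum differs from `∫₀^∞ f` by at most the total variation of `f`.
Writing `f'` through `v = c x + d`, the total variation is bounded by the Gaussian moments
`∫₀^∞ v^{δ ± 1} e^{-2t v²}`, which are `O(t^{-δ/2})`. After the same substitution, `∫₀^∞ f` is
`c⁻¹` times the moment `∫₀^∞ v^δ e^{-2t v²} = (2t)^{-(δ+1)/2} Γ((δ+1)/2) / 2`, up to the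
bounded contribution of `(0, d]`. -/

open Real Set MeasureTheory

section SumIntegral

variable {f f' : ℝ → ℝ}

theorem abs_sub_setIntegral_Ioc_le {a : ℝ}
    (hf : ∀ x ∈ Ioc a (a + 1), HasDerivAt f (f' x) x)
    (hf_int : IntegrableOn f (Ioc a (a + 1))) (hf' : IntegrableOn f' (Ioc a (a + 1))) :
    |f (a + 1) - ∫ x in Ioc a (a + 1), f x| ≤ ∫ x in Ioc a (a + 1), |f' x| := by
  have hpt : ∀ x ∈ Ioc a (a + 1), ‖f (a + 1) - f x‖ ≤ ∫ y in Ioc a (a + 1), |f' y| := by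
    intro x hx
    have hsub : Ioc x (a + 1) ⊆ Ioc a (a + 1) := Ioc_subset_Ioc_left hx.1.le
    rw [← intervalIntegral.integral_eq_sub_of_hasDerivAt
      (fun y hy => hf y ⟨hx.1.trans_le (uIcc_of_le hx.2 ▸ hy).1, (uIcc_of_le hx.2 ▸ hy).2⟩)
      ((intervalIntegrable_iff_integrableOn_Ioc_of_le hx.2).2 (hf'.mono_set hsub)),
      intervalIntegral.integral_of_le hx.2]
    calc ‖∫ y in Ioc x (a + 1), f' y‖ ≤ ∫ y in Ioc x (a + 1), |f' y| :=
          norm_integral_le_integral_norm _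
      _ ≤ ∫ y in Ioc a (a + 1), |f' y| :=
          setIntegral_mono_set hf'.abs (.of_forall fun _ => abs_nonneg _) hsub.eventuallyLE
  have := norm_setIntegral_le_of_norm_le_const (μ := volume) measure_Ioc_lt_top hpt
  have hconst : IntegrableOn (fun _ => f (a + 1)) (Ioc a (a + 1)) :=
    integrableOn_const measure_Ioc_lt_top.ne
  rw [integral_sub hconst hf_int, setIntegral_const] at this
  simpa using this

theorem iUnion_Ioc_natCast_add_one : ⋃ k : ℕ, Ioc (k : ℝ) (k + 1) = Ioi 0 := by
  refine Subset.antisymm (iUnion_subset fun k x hx => (Nat.cast_nonneg k).trans_lt hx.1) ?_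
  intro x (hx : 0 < x)
  obtain ⟨k, hk⟩ := Nat.exists_eq_add_of_lt (Nat.ceil_pos.2 hx)
  have hceil : ((⌈x⌉₊ : ℕ) : ℝ) = k + 1 := by rw [hk]; push_cast; ring
  refine mem_iUnion.2 ⟨k, ?_, ?_⟩
  · linarith [Nat.ceil_lt_add_one hx.le]
  · linarith [Nat.le_ceil x]

theorem pairwise_disjoint_Ioc_natCast :
    Pairwise (Function.onFun Disjoint fun k : ℕ => Ioc (k : ℝ) (k + 1)) :=
  (pairwise_disjoint_Ioc_intCast ℝ).comp_of_injective Nat.cast_injective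

theorem hasSum_integral_Ioc_natCast {g : ℝ → ℝ} (hg : IntegrableOn g (Ioi 0)) :
    HasSum (fun k : ℕ => ∫ x in Ioc (k : ℝ) (k + 1), g x) (∫ x in Ioi 0, g x) := by
  rw [← iUnion_Ioc_natCast_add_one] at hg ⊢
  exact hasSum_integral_iUnion (fun _ => measurableSet_Ioc) pairwise_disjoint_Ioc_natCast hg

theorem abs_tsum_sub_integral_Ioi_le (hf : ∀ x ∈ Ioi 0, HasDerivAt f (f' x) x)
    (hf_int : IntegrableOn f (Ioi 0)) (hf' : IntegrableOn f' (Ioi 0)) :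
    |(∑' k : ℕ, f (k + 1)) - ∫ x in Ioi 0, f x| ≤ ∫ x in Ioi 0, |f' x| := by
  have hsub (k : ℕ) : Ioc (k : ℝ) (k + 1) ⊆ Ioi 0 := fun x hx => (Nat.cast_nonneg k).trans_lt hx.1
  have hbound (k : ℕ) : ‖f (k + 1) - ∫ x in Ioc (k : ℝ) (k + 1), f x‖
      ≤ ∫ x in Ioc (k : ℝ) (k + 1), |f' x| :=
    abs_sub_setIntegral_Ioc_le (fun x hx => hf x (hsub k hx)) (hf_int.mono_set (hsub k))
      (hf'.mono_set (hsub k))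
  have hvar := hasSum_integral_Ioc_natCast hf'.abs
  have hdiff := (Summable.of_norm_bounded hvar.summable hbound).hasSum
  have htsum := (hdiff.add (hasSum_integral_Ioc_natCast hf_int)).tsum_eq
  simp only [sub_add_cancel] at htsum
  rw [htsum, add_sub_cancel_right]
  exact tsum_of_norm_bounded hvar hbound

end SumIntegral

section Affine

variable {E : Type*} [NormedAddCommGroup E] {c : ℝ}

theorem integral_comp_mul_add_Ioi [NormedSpace ℝ E] (g : ℝ → E) (hc : 0 < c) (d : ℝ) :
    ∫ x in Ioi 0, g (c * x + d) = c⁻¹ • ∫ x in Ioi d, g x := by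
  have hshift : ∫ x in Ioi 0, g (x + d) = ∫ x in Ioi d, g x := by
    simpa using (measurePreserving_add_right volume d).setIntegral_preimage_emb
      (Homeomorph.addRight d).measurableEmbedding g (Ioi d)
  simpa [hshift] using integral_comp_mul_left_Ioi (fun x => g (x + d)) 0 hc

theorem IntegrableOn.comp_mul_add_Ioi {g : ℝ → E} {d : ℝ} (hg : IntegrableOn g (Ioi d))
    (hc : 0 < c) : IntegrableOn (fun x => g (c * x + d)) (Ioi 0) := by
  have hshift : IntegrableOn (fun x => g (x + d)) (Ioi 0) := by
    simpa [Function.comp_def] using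
      ((measurePreserving_add_right volume d).integrableOn_comp_preimage
        (Homeomorph.addRight d).measurableEmbedding (s := Ioi d)).2 hg
  simpa using
    (integrableOn_Ioi_comp_mul_left_iff (fun x => g (x + d)) 0 hc).2 (by simpa using hshift)

end Affine

section GaussianMoments

variable {b δ : ℝ}

theorem integral_rpow_mul_exp_neg_mul_sq (hb : 0 < b) {s : ℝ} (hs : -1 < s) :
    ∫ x in Ioi 0, x ^ s * exp (-b * x ^ 2) = b ^ (-(s + 1) / 2) / 2 * Gamma ((s + 1) / 2) := by
  simp_rw [← rpow_two, integral_rpow_mul_exp_neg_mul_rpow two_pos hs hb]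
  ring

theorem hasDerivAt_rpow_mul_exp_neg_mul_sq {x : ℝ} (hx : 0 < x) :
    HasDerivAt (fun x => x ^ δ * exp (-b * x ^ 2))
      (δ * x ^ (δ - 1) * exp (-b * x ^ 2) - 2 * b * x ^ (δ + 1) * exp (-b * x ^ 2)) x := by
  have h := (hasDerivAt_rpow_const (p := δ) (Or.inl hx.ne')).mul
    ((hasDerivAt_pow 2 x).const_mul (-b)).exp
  refine h.congr_deriv ?_
  rw [rpow_add_one hx.ne']
  push_cast
  ring

theorem abs_deriv_rpow_mul_exp_neg_mul_sq_le (hb : 0 ≤ b) (hδ : 0 ≤ δ) {x : ℝ} (hx : 0 < x) :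
    |δ * x ^ (δ - 1) * exp (-b * x ^ 2) - 2 * b * x ^ (δ + 1) * exp (-b * x ^ 2)|
      ≤ δ * x ^ (δ - 1) * exp (-b * x ^ 2) + 2 * b * x ^ (δ + 1) * exp (-b * x ^ 2) := by
  have h₁ : 0 ≤ δ * x ^ (δ - 1) * exp (-b * x ^ 2) := by positivity
  have h₂ : 0 ≤ 2 * b * x ^ (δ + 1) * exp (-b * x ^ 2) := by positivity
  exact abs_sub_le_iff.2 ⟨by linarith, by linarith⟩

theorem integrableOn_mul_rpow_sub_one_mul_exp_neg_mul_sq (hb : 0 < b) (hδ : 0 ≤ δ) :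
    IntegrableOn (fun x => δ * x ^ (δ - 1) * exp (-b * x ^ 2)) (Ioi 0) := by
  rcases hδ.eq_or_lt with rfl | hδ
  · simp
  · exact IntegrableOn.congr_fun
      ((integrableOn_rpow_mul_exp_neg_mul_sq hb (by linarith : -1 < δ - 1)).const_mul δ)
      (fun x _ => by ring) measurableSet_Ioi

theorem integrableOn_mul_rpow_add_one_mul_exp_neg_mul_sq (hb : 0 < b) (hδ : 0 ≤ δ) :
    IntegrableOn (fun x => 2 * b * x ^ (δ + 1) * exp (-b * x ^ 2)) (Ioi 0) :=
  IntegrableOn.congr_fun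
    ((integrableOn_rpow_mul_exp_neg_mul_sq hb (by linarith : -1 < δ + 1)).const_mul (2 * b))
    (fun x _ => by ring) measurableSet_Ioi

theorem integral_mul_rpow_sub_one_mul_exp_neg_mul_sq_le (hb : 0 < b) (hδ : 0 ≤ δ) :
    ∫ x in Ioi 0, δ * x ^ (δ - 1) * exp (-b * x ^ 2) ≤ b ^ (-δ / 2) * Gamma (δ / 2 + 1) := by
  rcases hδ.eq_or_lt with rfl | hδ
  · simp
  · simp_rw [mul_assoc, integral_const_mul]
    rw [integral_rpow_mul_exp_neg_mul_sq hb (by linarith), sub_add_cancel,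
      Gamma_add_one (by positivity)]
    apply le_of_eq
    ring

theorem integral_mul_rpow_add_one_mul_exp_neg_mul_sq (hb : 0 < b) (hδ : 0 ≤ δ) :
    ∫ x in Ioi 0, 2 * b * x ^ (δ + 1) * exp (-b * x ^ 2) = b ^ (-δ / 2) * Gamma (δ / 2 + 1) := by
  simp_rw [mul_assoc, integral_const_mul]
  rw [integral_rpow_mul_exp_neg_mul_sq hb (by linarith),
    show -(δ + 1 + 1) / 2 = -δ / 2 - 1 by ring, rpow_sub_one hb.ne',
    show (δ + 1 + 1) / 2 = δ / 2 + 1 by ring]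
  field_simp

theorem integrableOn_deriv_rpow_mul_exp_neg_mul_sq (hb : 0 < b) (hδ : 0 ≤ δ) :
    IntegrableOn
      (fun x => δ * x ^ (δ - 1) * exp (-b * x ^ 2) - 2 * b * x ^ (δ + 1) * exp (-b * x ^ 2))
      (Ioi 0) :=
  (integrableOn_mul_rpow_sub_one_mul_exp_neg_mul_sq hb hδ).sub
    (integrableOn_mul_rpow_add_one_mul_exp_neg_mul_sq hb hδ)

theorem integral_abs_deriv_rpow_mul_exp_neg_mul_sq_le (hb : 0 < b) (hδ : 0 ≤ δ) :
    ∫ x in Ioi 0, |δ * x ^ (δ - 1) * exp (-b * x ^ 2) - 2 * b * x ^ (δ + 1) * exp (-b * x ^ 2)|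
      ≤ 2 * b ^ (-δ / 2) * Gamma (δ / 2 + 1) := by
  have h₁ := integrableOn_mul_rpow_sub_one_mul_exp_neg_mul_sq hb hδ
  have h₂ := integrableOn_mul_rpow_add_one_mul_exp_neg_mul_sq hb hδ
  calc _ ≤ ∫ x in Ioi 0,
        (δ * x ^ (δ - 1) * exp (-b * x ^ 2) + 2 * b * x ^ (δ + 1) * exp (-b * x ^ 2)) :=
        setIntegral_mono_on (integrableOn_deriv_rpow_mul_exp_neg_mul_sq hb hδ).abs (h₁.add h₂)
          measurableSet_Ioi fun x hx => abs_deriv_rpow_mul_exp_neg_mul_sq_le hb.le hδ hx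
    _ ≤ 2 * b ^ (-δ / 2) * Gamma (δ / 2 + 1) := by
      rw [integral_add h₁ h₂, integral_mul_rpow_add_one_mul_exp_neg_mul_sq hb hδ]
      linarith [integral_mul_rpow_sub_one_mul_exp_neg_mul_sq_le hb hδ]

theorem integral_Ioc_rpow_mul_exp_neg_mul_sq_le (hb : 0 ≤ b) (hδ : 0 ≤ δ) {d : ℝ} (hd : 0 ≤ d) :
    ∫ x in Ioc 0 d, x ^ δ * exp (-b * x ^ 2) ≤ d ^ (δ + 1) := by
  calc ∫ x in Ioc 0 d, x ^ δ * exp (-b * x ^ 2) ≤ ∫ _ in Ioc 0 d, d ^ δ := by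
        refine setIntegral_mono_on ?_ (integrableOn_const measure_Ioc_lt_top.ne) measurableSet_Ioc
          fun x hx => ?_
        · exact ((continuous_rpow_const hδ).mul (by fun_prop)).integrableOn_Ioc
        · calc x ^ δ * exp (-b * x ^ 2) ≤ x ^ δ * 1 := by
                gcongr
                · exact rpow_nonneg hx.1.le _
                · exact exp_le_one_iff.2 (by nlinarith)
            _ ≤ d ^ δ := by rw [mul_one]; exact rpow_le_rpow hx.1.le hx.2 hδ
    _ = d ^ (δ + 1) := by
        rw [setIntegral_const, Real.volume_real_Ioc_of_le hd, sub_zero,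
          rpow_add_one' hd (by linarith)]
        simp [mul_comm]

end GaussianMoments

section ThetaSum

variable {b c d δ : ℝ}

theorem abs_tsum_sub_integral_rpow_mul_exp_le (hb : 0 < b) (hc : 0 < c) (hd : 0 ≤ d)
    (hδ : 0 ≤ δ) :
    |(∑' k : ℕ, (c * (k + 1) + d) ^ δ * exp (-b * (c * (k + 1) + d) ^ 2))
        - ∫ x in Ioi 0, (c * x + d) ^ δ * exp (-b * (c * x + d) ^ 2)|
      ≤ 2 * b ^ (-δ / 2) * Gamma (δ / 2 + 1) := by
  set g' := fun v : ℝ =>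
    δ * v ^ (δ - 1) * exp (-b * v ^ 2) - 2 * b * v ^ (δ + 1) * exp (-b * v ^ 2)
  have hg' : IntegrableOn g' (Ioi 0) := integrableOn_deriv_rpow_mul_exp_neg_mul_sq hb hδ
  have hderiv : ∀ x ∈ Ioi (0 : ℝ),
      HasDerivAt (fun x => (c * x + d) ^ δ * exp (-b * (c * x + d) ^ 2)) (g' (c * x + d) * c) x :=
    fun x (hx : 0 < x) => (hasDerivAt_rpow_mul_exp_neg_mul_sq (by positivity)).comp x
      (((hasDerivAt_id x).const_mul c).add_const d |>.congr_deriv (mul_one c))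
  have hf : IntegrableOn (fun x => (c * x + d) ^ δ * exp (-b * (c * x + d) ^ 2)) (Ioi 0) :=
    IntegrableOn.comp_mul_add_Ioi ((integrableOn_rpow_mul_exp_neg_mul_sq hb (by linarith)).mono_set
      (Ioi_subset_Ioi hd)) hc
  refine (abs_tsum_sub_integral_Ioi_le hderiv hf
    ((IntegrableOn.comp_mul_add_Ioi (hg'.mono_set (Ioi_subset_Ioi hd)) hc).mul_const c)).trans ?_
  calc ∫ x in Ioi 0, |g' (c * x + d) * c| = ∫ x in Ioi d, |g' x| := by
        simp_rw [abs_mul, abs_of_pos hc, integral_mul_const]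
        rw [integral_comp_mul_add_Ioi (fun v => |g' v|) hc, smul_eq_mul]
        field_simp
    _ ≤ ∫ x in Ioi 0, |g' x| :=
        setIntegral_mono_set hg'.abs (.of_forall fun _ => abs_nonneg _)
          (Ioi_subset_Ioi hd).eventuallyLE
    _ ≤ 2 * b ^ (-δ / 2) * Gamma (δ / 2 + 1) := integral_abs_deriv_rpow_mul_exp_neg_mul_sq_le hb hδ

theorem abs_integral_rpow_mul_exp_sub_le (hb : 0 < b) (hc : 0 < c) (hd : 0 ≤ d) (hδ : 0 ≤ δ) :
    |(∫ x in Ioi 0, (c * x + d) ^ δ * exp (-b * (c * x + d) ^ 2))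
        - b ^ (-(δ + 1) / 2) / (2 * c) * Gamma ((δ + 1) / 2)| ≤ c⁻¹ * d ^ (δ + 1) := by
  set g := fun v : ℝ => v ^ δ * exp (-b * v ^ 2)
  have hg : IntegrableOn g (Ioi 0) := integrableOn_rpow_mul_exp_neg_mul_sq hb (by linarith)
  have hsplit : ∫ x in Ioi 0, g x = (∫ x in Ioc 0 d, g x) + ∫ x in Ioi d, g x := by
    rw [← Ioc_union_Ioi_eq_Ioi hd]
    exact setIntegral_union (Ioc_disjoint_Ioi le_rfl) measurableSet_Ioi
      (hg.mono_set Ioc_subset_Ioi_self) (hg.mono_set (Ioi_subset_Ioi hd))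
  have hnear_nonneg : 0 ≤ ∫ x in Ioc 0 d, g x :=
    setIntegral_nonneg measurableSet_Ioc fun x hx =>
      mul_nonneg (rpow_nonneg hx.1.le _) (exp_pos _).le
  have hmain : c⁻¹ * (∫ x in Ioi d, g x) - b ^ (-(δ + 1) / 2) / (2 * c) * Gamma ((δ + 1) / 2)
      = -(c⁻¹ * ∫ x in Ioc 0 d, g x) := by
    rw [show b ^ (-(δ + 1) / 2) / (2 * c) * Gamma ((δ + 1) / 2)
        = c⁻¹ * (b ^ (-(δ + 1) / 2) / 2 * Gamma ((δ + 1) / 2)) by ring,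
      ← integral_rpow_mul_exp_neg_mul_sq hb (by linarith), hsplit]
    ring
  rw [integral_comp_mul_add_Ioi g hc, smul_eq_mul, hmain, abs_neg, abs_of_nonneg (by positivity)]
  exact mul_le_mul_of_nonneg_left (integral_Ioc_rpow_mul_exp_neg_mul_sq_le hb.le hδ hd)
    (inv_nonneg.2 hc.le)

theorem abs_tsum_rpow_mul_exp_sub_le (hb : 0 < b) (hc : 0 < c) (hd : 0 ≤ d) (hδ : 0 ≤ δ) :
    |(∑' k : ℕ, (c * (k + 1) + d) ^ δ * exp (-b * (c * (k + 1) + d) ^ 2))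
        - b ^ (-(δ + 1) / 2) / (2 * c) * Gamma ((δ + 1) / 2)|
      ≤ 2 * b ^ (-δ / 2) * Gamma (δ / 2 + 1) + c⁻¹ * d ^ (δ + 1) :=
  (abs_sub_le _ _ _).trans (add_le_add (abs_tsum_sub_integral_rpow_mul_exp_le hb hc hd hδ)
    (abs_integral_rpow_mul_exp_sub_le hb hc hd hδ))

end ThetaSum

/-- Asymptotics of the theta-like sum `Σ_{k=1}^∞ (ck+d)^δ e^{−2(ck+d)²t}` as `t → 0⁺`. -/
theorem stmt14 (c d δ : ℝ) (hc : 0 < c) (hd : 0 ≤ d) (hδ : 0 ≤ δ) :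
    ∃ M t₀ : ℝ, 0 < M ∧ 0 < t₀ ∧ ∀ t : ℝ, 0 < t → t < t₀ →
      |(∑' k : ℕ, (c * ((k : ℝ) + 1) + d) ^ δ *
            Real.exp (-2 * (c * ((k : ℝ) + 1) + d) ^ 2 * t))
          - (2 * t) ^ (-(δ + 1) / 2) / (2 * c) * Real.Gamma ((δ + 1) / 2)|
        ≤ M * t ^ (-δ / 2) := by
  refine ⟨2 * Gamma (δ / 2 + 1) + c⁻¹ * d ^ (δ + 1), 1, by positivity, one_pos, fun t ht ht1 => ?_⟩
  have hrpow : (2 * t) ^ (-δ / 2) ≤ t ^ (-δ / 2) :=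
    rpow_le_rpow_of_nonpos ht (by linarith) (by linarith)
  have hone : 1 ≤ t ^ (-δ / 2) := one_le_rpow_of_pos_of_le_one_of_nonpos ht ht1.le (by linarith)
  simp_rw [show ∀ y : ℝ, -2 * y ^ 2 * t = -(2 * t) * y ^ 2 by intro y; ring]
  calc _ ≤ 2 * (2 * t) ^ (-δ / 2) * Gamma (δ / 2 + 1) + c⁻¹ * d ^ (δ + 1) :=
        abs_tsum_rpow_mul_exp_sub_le (by positivity) hc hd hδ
    _ ≤ 2 * t ^ (-δ / 2) * Gamma (δ / 2 + 1) + c⁻¹ * d ^ (δ + 1) * t ^ (-δ / 2) := by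
        gcongr ?_ + ?_
        · gcongr
        · exact le_mul_of_one_le_right (by positivity) hone
    _ = _ := by ring
end

section
/- Let d ≥ 0 be a real number. Then, as t → 0⁺, Σ_{k=1}^{∞} (2k+d)^{−1} e^{−2(2k+d)² t} = O(log(1/t)); that is, there exist constants M, t₀ > 0 such that for all 0 < t < t₀, Σ_{k=1}^{∞} (2k+d)^{−1} e^{−2(2k+d)² t} ≤ M log(1/t). -/
/-!
Since `e^{-y} ≤ y^{-ε}` for `y > 0` and `0 ≤ ε ≤ 1`, and `a_k = 2(k+1)+d ≥ k+1`, each term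
`a_k⁻¹ e^{-s a_k²}` (with `s = 2t`) is at most `s^{-ε} (k+1)^{-(1+2ε)}`, so the series is at
most `s^{-ε} ζ(1+2ε) ≤ s^{-ε} (1 + 1/(2ε))`.
Choosing `ε = 1 / log (1/s)` makes `s^{-ε} = e`, leaving `e (1 + log (1/s) / 2)`.
-/

open Real Finset

lemma exp_neg_le_rpow_neg {y ε : ℝ} (hy : 0 < y) (hε₀ : 0 ≤ ε) (hε₁ : ε ≤ 1) :
    exp (-y) ≤ y ^ (-ε) := by
  rw [rpow_def_of_pos hy, exp_le_exp]
  have hlog : log y < y := (log_le_sub_one_of_pos hy).trans_lt (by linarith)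
  rcases le_total 0 (log y) with h | h <;> nlinarith

lemma inv_mul_exp_neg_mul_sq_le {a s ε : ℝ} (ha : 0 < a) (hs : 0 < s) (hε₀ : 0 ≤ ε)
    (hε₁ : ε ≤ 1) : a⁻¹ * exp (-(s * a ^ 2)) ≤ s ^ (-ε) * a ^ (-(1 + 2 * ε)) := calc
  a⁻¹ * exp (-(s * a ^ 2)) ≤ a⁻¹ * (s * a ^ 2) ^ (-ε) := by
    gcongr; exact exp_neg_le_rpow_neg (by positivity) hε₀ hε₁
  _ = s ^ (-ε) * a ^ (-(1 + 2 * ε)) := by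
    rw [mul_rpow hs.le (by positivity), ← rpow_natCast, ← rpow_mul ha.le, neg_add,
      rpow_add ha, rpow_neg_one]
    push_cast
    ring_nf

lemma sum_range_add_one_rpow_neg_le {p : ℝ} (hp : 1 < p) (m : ℕ) :
    ∑ n ∈ range m, ((n : ℝ) + 1) ^ (-p) ≤ p / (p - 1) := by
  have hp' : 0 < p - 1 := by linarith
  rcases m with _ | m
  · simp only [range_zero, sum_empty]; positivity
  have hanti : AntitoneOn (fun x : ℝ => x ^ (-p)) (Set.Icc 1 (1 + m)) := fun x hx y _ hxy =>
    rpow_le_rpow_of_nonpos (by linarith [hx.1]) hxy (by linarith)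
  have hint : ∫ x in (1 : ℝ)..1 + m, x ^ (-p) ≤ 1 / (p - 1) := by
    rw [integral_rpow (Or.inr ⟨by linarith, by simp⟩), one_rpow,
      show -p + 1 = -(p - 1) by ring, div_neg, ← neg_div, div_le_div_iff_of_pos_right hp']
    linarith [rpow_nonneg (show (0 : ℝ) ≤ 1 + m by positivity) (-(p - 1))]
  calc ∑ n ∈ range (m + 1), ((n : ℝ) + 1) ^ (-p)
      = ∑ i ∈ range m, (1 + ((i + 1 : ℕ) : ℝ)) ^ (-p) + 1 := by
        rw [sum_range_succ']; push_cast; simp only [zero_add, one_rpow]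
        congr 1; refine sum_congr rfl fun i _ => by ring_nf
    _ ≤ 1 / (p - 1) + 1 := by gcongr; exact (hanti.sum_le_integral).trans hint
    _ = p / (p - 1) := by field_simp; ring

theorem tsum_inv_mul_exp_neg_mul_sq_le {a : ℕ → ℝ} (ha : ∀ k : ℕ, (k : ℝ) + 1 ≤ a k) {s : ℝ}
    (hs : 0 < s) (hs₂ : s ≤ exp (-2)) :
    ∑' k, (a k)⁻¹ * exp (-(s * a k ^ 2)) ≤ exp 1 * log (1 / s) := by
  set L := log (1 / s)
  have hL : 2 ≤ L := by
    rw [show L = log (1 / s) from rfl, one_div, log_inv, le_neg, ← log_exp (-2)]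
    exact log_le_log hs hs₂
  have hapos : ∀ k, 0 < a k := fun k => by linarith [ha k, (k.cast_nonneg : (0 : ℝ) ≤ k)]
  -- With `ε = 1 / log (1 / s)` the factor `s ^ (-ε)` is exactly `e`.
  have hsε : s ^ (-L⁻¹) = exp 1 := by
    rw [rpow_def_of_pos hs, show log s = -L by simp [L]]
    field_simp
  have hε₀ : 0 < L⁻¹ := by positivity
  have hε₁ : L⁻¹ ≤ 1 := inv_le_one_of_one_le₀ (by linarith)
  have hterm : ∀ k : ℕ, (a k)⁻¹ * exp (-(s * a k ^ 2)) ≤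
      exp 1 * ((k : ℝ) + 1) ^ (-(1 + 2 * L⁻¹)) := fun k => calc
    _ ≤ s ^ (-L⁻¹) * a k ^ (-(1 + 2 * L⁻¹)) :=
      inv_mul_exp_neg_mul_sq_le (hapos k) hs hε₀.le hε₁
    _ ≤ exp 1 * ((k : ℝ) + 1) ^ (-(1 + 2 * L⁻¹)) := by
      rw [hsε]
      exact mul_le_mul_of_nonneg_left
        (rpow_le_rpow_of_nonpos k.cast_add_one_pos (ha k) (by linarith)) (exp_pos 1).le
  refine Real.tsum_le_of_sum_range_le (fun k => (mul_pos (inv_pos.2 (hapos k)) (exp_pos _)).le)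
    fun m => ?_
  calc ∑ k ∈ range m, (a k)⁻¹ * exp (-(s * a k ^ 2))
      ≤ exp 1 * ∑ k ∈ range m, ((k : ℝ) + 1) ^ (-(1 + 2 * L⁻¹)) := by
        rw [mul_sum]; exact sum_le_sum fun k _ => hterm k
    _ ≤ exp 1 * ((1 + 2 * L⁻¹) / (1 + 2 * L⁻¹ - 1)) := by
        gcongr; exact sum_range_add_one_rpow_neg_le (by linarith) m
    _ = exp 1 * (L / 2 + 1) := by
        congr 1; field_simp; ring
    _ ≤ exp 1 * L := by gcongr; linarith

/-- The theta-like sum `Σ_{k=1}^∞ (2k+d)^{−1} e^{−2(2k+d)²t}` is `O(log(1/t))` as `t → 0⁺`. -/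
theorem stmt15 (d : ℝ) (hd : 0 ≤ d) :
    ∃ M t₀ : ℝ, 0 < M ∧ 0 < t₀ ∧ ∀ t : ℝ, 0 < t → t < t₀ →
      (∑' k : ℕ, (2 * ((k : ℝ) + 1) + d)⁻¹ *
          Real.exp (-2 * (2 * ((k : ℝ) + 1) + d) ^ 2 * t))
        ≤ M * Real.log (1 / t) := by
  refine ⟨exp 1, exp (-2) / 2, exp_pos 1, by positivity, fun t ht ht₀ => ?_⟩
  have hbound := tsum_inv_mul_exp_neg_mul_sq_le (a := fun k : ℕ => 2 * ((k : ℝ) + 1) + d)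
    (fun k => by linarith [(k.cast_nonneg : (0 : ℝ) ≤ k)]) (s := 2 * t) (by positivity)
    (by linarith)
  calc _ = ∑' k : ℕ, (2 * ((k : ℝ) + 1) + d)⁻¹ *
          exp (-(2 * t * (2 * ((k : ℝ) + 1) + d) ^ 2)) := tsum_congr fun k => by ring_nf
    _ ≤ exp 1 * log (1 / (2 * t)) := hbound
    _ ≤ exp 1 * log (1 / t) := by gcongr; linarith
end
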